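/- The pair 𝔭^cmz_H = (𝒢^cmz_H, F_H) is a suitable simplified universality parameter; in particular 𝒢^cmz_H satisfies the amalgamation axiom (δ) of universality parameters. -/

import Mathlib

open Set Filter MeasureTheory NNReal ENNReal

namespace UnivForcing

abbrev Node := List ℕ

/-- `η` is a node respecting `H`: each entry is below the corresponding value of `H`. -/
def IsHNode (H : ℕ → ℕ) (η : Node) : Prop := ∀ i < η.length, η.getD i 0 < H i

/-- A tree of finite sequences: contains the empty sequence and is closed under prefixes. -/
def IsTreeSet (T : Set Node) : Prop :=
  ([] : Node) ∈ T ∧ ∀ η ∈ T, ∀ ν : Node, ν <+: η → ν ∈ T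

/-- The nodes of `T` of length exactly `n`. -/
def levelSet (T : Set Node) (n : ℕ) : Set Node := {η ∈ T | η.length = n}

/-- The nodes of `T` of length at most `n`. -/
def below (T : Set Node) (n : ℕ) : Set Node := {η ∈ T | η.length ≤ n}

/-- A finite `H`-tree of level `N`. -/
def IsFinTree (H : ℕ → ℕ) (T : Set Node) (N : ℕ) : Prop :=
  IsTreeSet T ∧ (∀ η ∈ T, IsHNode H η ∧ η.length ≤ N) ∧
    ∀ η ∈ T, ∃ ν ∈ T, η <+: ν ∧ ν.length = N

/-- An infinite `H`-tree: a tree of `H`-nodes with no maximal nodes. -/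
def IsInfTree (H : ℕ → ℕ) (T : Set Node) : Prop :=
  IsTreeSet T ∧ (∀ η ∈ T, IsHNode H η) ∧ ∀ η ∈ T, ∃ ν ∈ T, η <+: ν ∧ η ≠ ν

/-- A simplified universality parameter (Definition 2.2). -/
structure UnivParam (H : ℕ → ℕ) where
  G : Set (Set Node × ℕ × ℕ)
  F : ℕ → ℕ
  G_tree : ∀ S a b, (S, a, b) ∈ G → ∃ N, IsFinTree H S N ∧ a ≤ b ∧ b ≤ N
  G_root : ((({([] : Node)}) : Set Node), 0, 0) ∈ G
  G_mono : ∀ S0 a0 b0 N0 S1 N1, (S0, a0, b0) ∈ G → IsFinTree H S0 N0 →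
    IsFinTree H S1 N1 → N0 ≤ N1 → levelSet S1 N0 ⊆ S0 →
    ∀ a1 b1, a1 ≤ a0 → b0 ≤ b1 → b1 ≤ N1 → (S1, a1, b1) ∈ G
  F_incr : StrictMono F
  G_amalg : ∀ S0 a0 b0 S1 a1 b1 N S M,
    (S0, a0, b0) ∈ G → (S1, a1, b1) ∈ G →
    IsFinTree H S0 N → IsFinTree H S1 N → IsFinTree H S M → M < N →
    levelSet S0 M ⊆ S → levelSet S1 M ⊆ S →
    M < a0 → b0 < a1 → F b1 < N →
    ∃ S', (S', a0, F b1) ∈ G ∧ IsFinTree H S' N ∧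
      S0 ∪ S1 ⊆ S' ∧ levelSet S' M = levelSet S M

/-- `T` is narrow with respect to the family `G` (Definition 2.3(1)). -/
def IsNarrowG (G : Set (Set Node × ℕ × ℕ)) (T : Set Node) : Prop :=
  ∀ m, ∃ a, m ≤ a ∧ ∃ b, a < b ∧ (below T (b + 1), a, b) ∈ G

def IsNarrow {H : ℕ → ℕ} (p : UnivParam H) (T : Set Node) : Prop := IsNarrowG p.G T

/-- Suitability of a universality parameter (Definition 3.5(1)). -/
def Suitable {H : ℕ → ℕ} (p : UnivParam H) : Prop :=
  (∀ n, ∃ N, n < N ∧ ∀ S a b NS, (S, a, b) ∈ p.G → IsFinTree H S NS → N ≤ a →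
    ∀ η : Node, IsHNode H η → η.length = n →
      ∃ ν : Node, IsHNode H ν ∧ ν.length = NS ∧ η <+: ν ∧ ν ∉ S) ∧
  (∀ n, ∃ N, n < N ∧ ∀ S, IsFinTree H S n →
    ∀ η : Node, IsHNode H η → η.length = N → η.take n ∈ S →
      ∃ S' a b, (S', a, b) ∈ p.G ∧ n < a ∧ a ≤ b ∧ b < N ∧ S ⊆ S' ∧
        levelSet S' n = levelSet S n ∧ η ∈ S')

/-- The space 𝒳 = ∏_{i<ω} H(i). -/
abbrev XSp (H : ℕ → ℕ) := (i : ℕ) → Fin (H i)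

/-- The initial segment of length `n` of a point of 𝒳, as a node. -/
def branchNode (H : ℕ → ℕ) (x : XSp H) (n : ℕ) : Node :=
  List.ofFn fun i : Fin n => (x i : ℕ)

/-- The set of ω-branches `[T]` of a tree `T`, as a subset of 𝒳. -/
def branches (H : ℕ → ℕ) (T : Set Node) : Set (XSp H) :=
  {x | ∀ n, branchNode H x n ∈ T}

/-- A closed narrow set: the branch set of a narrow infinite `H`-tree. -/
def NarrowClosedG (H : ℕ → ℕ) (G : Set (Set Node × ℕ × ℕ)) (A : Set (XSp H)) : Prop :=
  ∃ T, IsInfTree H T ∧ IsNarrowG G T ∧ A = branches H T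

/-- The ideal ℐ⁰ generated by narrow closed sets. -/
def I0G (H : ℕ → ℕ) (G : Set (Set Node × ℕ × ℕ)) : Set (Set (XSp H)) :=
  {A | ∃ (n : ℕ) (f : Fin n → Set (XSp H)),
    (∀ i, NarrowClosedG H G (f i)) ∧ A ⊆ ⋃ i, f i}

/-- The σ-ideal ℐ generated by narrow closed sets. -/
def IpG (H : ℕ → ℕ) (G : Set (Set Node × ℕ × ℕ)) : Set (Set (XSp H)) :=
  {A | ∃ f : ℕ → Set (XSp H), (∀ n, NarrowClosedG H G (f n)) ∧ A ⊆ ⋃ n, f n}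

/-- A coordinate-wise permutation for `H`. -/
structure CWPerm (H : ℕ → ℕ) where
  f : ℕ → ℕ → ℕ
  bij : ∀ n, Set.BijOn (f n) (Set.Iio (H n)) (Set.Iio (H n))
  id_out : ∀ n k, H n ≤ k → f n k = k

/-- The action of a coordinate-wise permutation on a node. -/
def CWPerm.apply {H : ℕ → ℕ} (π : CWPerm H) (η : Node) : Node :=
  η.mapIdx fun i k => π.f i k

/-- `π` is an `n`-coordinate-wise permutation. -/
def CWPerm.IsRat {H : ℕ → ℕ} (π : CWPerm H) (n : ℕ) : Prop :=
  ∀ m, n < m → ∀ k, π.f m k = k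

/-- The action of a coordinate-wise permutation on the space 𝒳. -/
def CWPerm.act {H : ℕ → ℕ} (π : CWPerm H) (x : XSp H) : XSp H :=
  fun i => ⟨π.f i (x i).val, (π.bij i).mapsTo (x i).isLt⟩

/-- A regular universality parameter (Definition 3.13). -/
def RegularParam {H : ℕ → ℕ} (p : UnivParam H) : Prop :=
  Suitable p ∧ ∀ π : CWPerm H, (∃ n, π.IsRat n) →
    ∀ S a b, (S, a, b) ∈ p.G → (π.apply '' S, a, b) ∈ p.G

/-- The additivity of an ideal (family of sets). -/
noncomputable def addIdeal {α : Type} (I : Set (Set α)) : Cardinal :=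
  sInf {c | ∃ A : Set (Set α), A ⊆ I ∧ ⋃₀ A ∉ I ∧ Cardinal.mk A = c}

/-- The cofinality of an ideal (family of sets). -/
noncomputable def cofIdeal {α : Type} (I : Set (Set α)) : Cardinal :=
  sInf {c | ∃ A : Set (Set α), A ⊆ I ∧ (∀ B ∈ I, ∃ C ∈ A, B ⊆ C) ∧ Cardinal.mk A = c}

/-- Eventual domination `f ≤* g`. -/
def evDomLE (f g : ℕ → ℕ) : Prop := ∀ᶠ n in atTop, f n ≤ g n

/-- The unbounding number 𝔟. -/
noncomputable def bNum : Cardinal :=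
  sInf {c | ∃ F : Set (ℕ → ℕ), (∀ g, ∃ f ∈ F, ¬ evDomLE f g) ∧ Cardinal.mk F = c}

/-- The dominating number 𝔡. -/
noncomputable def dNum : Cardinal :=
  sInf {c | ∃ F : Set (ℕ → ℕ), (∀ g, ∃ f ∈ F, evDomLE g f) ∧ Cardinal.mk F = c}

/-- The family 𝒢^{g,A}_𝐅 of Definition 2.8. -/
def GgA (H : ℕ → ℕ) (g : ℕ → ℕ) (A : Set ℕ) (FF : Set Node → NNReal) :
    Set (Set Node × ℕ × ℕ) :=
  {x | x = ((({([] : Node)}) : Set Node), 0, 0) ∨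
    ∃ (S : Set Node) (a b N : ℕ), x = (S, a, b) ∧ IsFinTree H S N ∧ a ≤ b ∧ b ≤ N ∧
      (∀ ν ∈ levelSet S a, ∃ η : Node, IsHNode H η ∧ η.length = N ∧ ν <+: η ∧ η ∉ S) ∧
      ∃ Y : ℕ → Set Node,
        (∀ i ∈ A ∩ Set.Ico a b, IsFinTree H (Y i) (i + 1) ∧ FF (Y i) ≤ (g i : NNReal)) ∧
        ∀ η ∈ levelSet S N, ∃ i ∈ A ∩ Set.Ico a b, η.take (i + 1) ∈ levelSet (Y i) (i + 1)}

/-- The family 𝒢^cmz_H of Definition 2.12. -/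
def Gcmz (H : ℕ → ℕ) : Set (Set Node × ℕ × ℕ) :=
  {x | x = ((({([] : Node)}) : Set Node), 0, 0) ∨
    ∃ (S : Set Node) (a b N : ℕ), x = (S, a, b) ∧ IsFinTree H S N ∧ a ≤ b ∧ b ≤ N ∧
      ((levelSet S b).ncard : ℝ) / (∏ i ∈ Finset.range b, (H i : ℝ)) ≤
        ∑ i ∈ Finset.Icc a b, 1 / ((i : ℝ) + 1) ^ 2}

/-- The level of a set of nodes (the supremum of the lengths of its elements). -/
noncomputable def treeLev (S : Set Node) : ℕ := sSup {n | ∃ η ∈ S, η.length = n}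

/-- The function 𝐅₂ of Example 2.10(2). -/
noncomputable def F2fn (S : Set Node) : NNReal :=
  ((({k | ∃ η ∈ levelSet S (treeLev S), η.getLast? = some k}).ncard - 1 : ℕ) : NNReal)

/-- Immediate successors of a node in a tree. -/
def succs (S : Set Node) (s : Node) : Set Node :=
  {ν ∈ S | s <+: ν ∧ ν.length = s.length + 1}

/-- The function 𝐅₀ of Example 2.10(1). -/
noncomputable def F0fn (S : Set Node) : NNReal :=
  ((sSup {m | ∃ s ∈ S, (∃ ν ∈ S, s <+: ν ∧ s ≠ ν) ∧ m = (succs S s).ncard - 1} : ℕ) : NNReal)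

/-- The function 𝐅₁ of Example 2.10(1). -/
noncomputable def F1fn (S : Set Node) : NNReal :=
  (((levelSet S (treeLev S)).ncard - 1 : ℕ) : NNReal)

/-- The basic cylinder determined by a node. -/
def cyl (H : ℕ → ℕ) (η : Node) : Set (XSp H) := {x | branchNode H x η.length = η}

/-- The mass of the cylinder of a node with respect to the product measure:
`1/∏_{i<lh(η)} H(i)`. -/
noncomputable def cylMass (H : ℕ → ℕ) (η : Node) : ℝ≥0∞ :=
  (∏ i ∈ Finset.range η.length, (H i : ℝ≥0∞))⁻¹

/-- `A` is null with respect to the product measure on 𝒳 (each factor carrying the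
uniform probability measure): for every `ε > 0`, `A` can be covered by countably many
basic cylinders of total mass at most `ε`. -/
def ProdNull (H : ℕ → ℕ) (A : Set (XSp H)) : Prop :=
  ∀ ε : ℝ≥0∞, 0 < ε → ∃ C : ℕ → Node, A ⊆ (⋃ n, cyl H (C n)) ∧ ∑' n, cylMass H (C n) ≤ ε

/-- A condition in the forcing notion Q^tree(𝔭). -/
def QCond (H : ℕ → ℕ) (p : UnivParam H) (q : ℕ × Set Node) : Prop :=
  IsInfTree H q.2 ∧ IsNarrow p q.2

/-- The order of the forcing notion Q^tree(𝔭). -/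
def QLe (q r : ℕ × Set Node) : Prop :=
  q.1 ≤ r.1 ∧ q.2 ⊆ r.2 ∧ levelSet r.2 q.1 = levelSet q.2 q.1


/-- The subtree `T^{[ν]}` of nodes of `T` extending `ν`. -/
def aboveNode (T : Set Node) (ν : Node) : Set Node := {η ∈ T | ν <+: η}

/-- The set `Z(n̄, w̄)` of Proposition 4.6. -/
def Zset (H : ℕ → ℕ) (A : Set ℕ) (nseq : ℕ → ℕ) (w : ℕ → Set ℕ) : Set (XSp H) :=
  {x | ∀ᶠ k in atTop, ∃ i ∈ A ∩ Set.Ico (nseq k) (nseq (k + 1)), ((x i : ℕ) ∈ w i)}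


lemma pow_lemma : ∀ m, 15 ≤ m → 4 * m ^ 2 ≤ 2 ^ m := by
  intro m hm
  induction m, hm using Nat.le_induction with
  | base => norm_num
  | succ k hk ih =>
    have h2 : 4 * (k + 1) ^ 2 ≤ 2 * (4 * k ^ 2) := by nlinarith
    calc 4 * (k + 1) ^ 2 ≤ 2 * (4 * k ^ 2) := h2
      _ ≤ 2 * 2 ^ k := by omega
      _ = 2 ^ (k + 1) := by ring

lemma two_mul_le_pow : ∀ t, 1 ≤ t → 2 * t ≤ 2 ^ t := by
  intro t ht
  induction t, ht using Nat.le_induction with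
  | base => norm_num
  | succ k hk ih =>
    have h2 : (2:ℕ) ≤ 2 ^ k := by
      calc (2:ℕ) ≤ 2 * k := by omega
        _ ≤ 2 ^ k := ih
    have : 2 ^ (k+1) = 2 ^ k + 2 ^ k := by ring
    omega

lemma numeric1 {t b M : ℕ} (ht : 2 ≤ t) (hM : M + 1 ≤ t) (hb : t ^ 2 * 2 ^ t < b) :
    (b + 1) ^ 2 ≤ 2 ^ (b - M) := by
  have e1 : 2 * t ≤ 2 ^ t := two_mul_le_pow t (by omega)
  have e2 : 4 * t ^ 2 ≤ t ^ 2 * 2 ^ t := by nlinarith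
  have hbt : 4 * t ^ 2 < b := by omega
  have htb : 8 * t < b := by nlinarith
  set m := b - t + 1 with hm
  have hmb : m = b - t + 1 := hm
  have htb' : t ≤ b := by omega
  have hm15 : 15 ≤ m := by
    have : 4 * t ^ 2 ≥ t + 14 := by nlinarith
    omega
  have L1 : 4 * m ^ 2 ≤ 2 ^ m := pow_lemma m hm15
  have h3 : b + 1 ≤ 2 * m := by omega
  have h4 : (b + 1) ^ 2 ≤ 4 * m ^ 2 := by nlinarith
  have h5 : m ≤ b - M := by omega
  calc (b + 1) ^ 2 ≤ 4 * m ^ 2 := h4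
    _ ≤ 2 ^ m := L1
    _ ≤ 2 ^ (b - M) := Nat.pow_le_pow_right (by norm_num) h5

lemma numeric2 {n Pn : ℕ} (h1 : 1 ≤ Pn) (h2 : n ≤ Pn) :
    (2 * Pn + n + 33) ^ 2 * (1 + Pn) ≤ Pn * 2 ^ (2 * Pn + 32) := by
  set m := Pn + 16 with hm
  have L := pow_lemma m (by omega)
  have e1 : 2 ^ (2 * Pn + 32) = 2 ^ m * 2 ^ m := by
    rw [← pow_add]; congr 1; omega
  have e2 : (4 * m ^ 2) * (4 * m ^ 2) ≤ 2 ^ m * 2 ^ m := Nat.mul_le_mul L L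
  have ha : 2 * Pn + n + 33 ≤ 3 * m := by omega
  have hb : (2 * Pn + n + 33) ^ 2 ≤ 9 * m ^ 2 := by nlinarith
  have hc : 1 + Pn ≤ 2 * Pn := by omega
  have e3 : (2 * Pn + n + 33) ^ 2 * (1 + Pn) ≤ (9 * m ^ 2) * (2 * Pn) :=
    Nat.mul_le_mul hb hc
  have hm16 : 16 ≤ m := by omega
  have e4 : (9 * m ^ 2) * (2 * Pn) ≤ Pn * ((4 * m ^ 2) * (4 * m ^ 2)) := by
    have h5m : 2 ≤ m ^ 2 := by nlinarith
    have h5 : 18 * m ^ 2 ≤ 16 * m ^ 2 * m ^ 2 := by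
      nlinarith [Nat.mul_le_mul_left (16 * m ^ 2) h5m]
    calc (9 * m ^ 2) * (2 * Pn) = Pn * (18 * m ^ 2) := by ring
      _ ≤ Pn * (16 * m ^ 2 * m ^ 2) := Nat.mul_le_mul_left _ h5
      _ = Pn * ((4 * m ^ 2) * (4 * m ^ 2)) := by ring
  calc (2 * Pn + n + 33) ^ 2 * (1 + Pn) ≤ (9 * m ^ 2) * (2 * Pn) := e3
    _ ≤ Pn * ((4 * m ^ 2) * (4 * m ^ 2)) := e4
    _ ≤ Pn * (2 ^ m * 2 ^ m) := Nat.mul_le_mul_left _ e2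
    _ = Pn * 2 ^ (2 * Pn + 32) := by rw [e1]

lemma inv_sq_key (x : ℝ) (hx : 1 ≤ x) : 1 / (x + 1) ^ 2 ≤ 1 / x - 1 / (x + 1) := by
  have hx0 : 0 < x := by linarith
  have hx1 : 0 < x + 1 := by linarith
  rw [div_sub_div _ _ (ne_of_gt hx0) (ne_of_gt hx1), one_mul, mul_one]
  have h : x + 1 - x = 1 := by ring
  rw [h]
  apply one_div_le_one_div_of_le (by positivity)
  nlinarith

lemma sum_inv_sq_aux (N : ℕ) (hN : 1 ≤ N) :
    ∀ j, ∑ i ∈ Finset.Icc N (N + j), (1:ℝ) / ((i:ℝ) + 1) ^ 2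
      ≤ 1 / (N:ℝ) - 1 / ((N:ℝ) + (j:ℝ) + 1) := by
  have hN1 : (1:ℝ) ≤ (N:ℝ) := by exact_mod_cast hN
  intro j
  induction j with
  | zero =>
    simp only [Nat.add_zero, Finset.Icc_self, Finset.sum_singleton, Nat.cast_zero]
    have h0 := inv_sq_key (N : ℝ) hN1
    ring_nf at h0 ⊢
    linarith
  | succ k ih =>
    have e : N + (k + 1) = (N + k) + 1 := by omega
    rw [e, Finset.sum_Icc_succ_top (by omega)]
    have hk0 : (0:ℝ) ≤ (k:ℝ) := Nat.cast_nonneg k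
    have hx : (1:ℝ) ≤ (N:ℝ) + (k:ℝ) + 1 := by linarith
    have h0 := inv_sq_key ((N : ℝ) + (k:ℝ) + 1) hx
    have g1 : (1:ℝ) / ((↑(N + k + 1) : ℝ) + 1) ^ 2
        ≤ 1 / ((N:ℝ) + (k:ℝ) + 1) - 1 / ((N:ℝ) + (k:ℝ) + 1 + 1) := by
      push_cast
      exact h0
    have g2 : (N:ℝ) + (↑(k + 1) : ℝ) + 1 = (N:ℝ) + (k:ℝ) + 1 + 1 := by push_cast; ring
    rw [g2]
    linarith

lemma sum_inv_sq_le (N b : ℕ) (hN : 1 ≤ N) :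
    ∑ i ∈ Finset.Icc N b, (1:ℝ) / ((i:ℝ) + 1) ^ 2 ≤ 1 / (N:ℝ) := by
  rcases Nat.lt_or_ge b N with h | h
  · rw [Finset.Icc_eq_empty (by omega)]
    simp only [Finset.sum_empty]
    positivity
  · obtain ⟨j, rfl⟩ := Nat.exists_eq_add_of_le h
    have h1 := sum_inv_sq_aux N hN j
    have h2 : (0:ℝ) < (N:ℝ) + (j:ℝ) + 1 := by positivity
    have h3 : (0:ℝ) < 1 / ((N:ℝ) + (j:ℝ) + 1) := by positivity
    linarith


lemma isHNode_prefix {H : ℕ → ℕ} {η ν : Node} (h1 : IsHNode H η) (h2 : ν <+: η) :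
    IsHNode H ν := by
  obtain ⟨t, rfl⟩ := h2
  intro i hi
  have := h1 i (by rw [List.length_append]; omega)
  rwa [List.getD_append _ _ _ i hi] at this

lemma eq_dropLast_concat {η : Node} {b : ℕ} (h : η.length = b + 1) :
    η = η.dropLast ++ [η.getD b 0] := by
  have hne : η ≠ [] := by intro he; rw [he] at h; simp at h
  have h1 : η.getD b 0 = η.getLast hne := by
    rw [List.getLast_eq_getElem, List.getD_eq_getElem _ _ (by omega)]
    congr 1
    omega
  rw [h1, List.dropLast_append_getLast]

lemma hnodes_finite (H : ℕ → ℕ) (N : ℕ) :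
    {η : Node | IsHNode H η ∧ η.length ≤ N}.Finite := by
  induction N with
  | zero =>
    apply Set.Finite.subset (Set.finite_singleton ([] : Node))
    rintro η ⟨-, hlen⟩
    simp only [Nat.le_zero, List.length_eq_zero_iff] at hlen
    simp [hlen]
  | succ N ih =>
    apply Set.Finite.subset (ih.union (((ih.prod (Set.finite_Iio (H N)))).image
      (fun p : Node × ℕ => p.1 ++ [p.2])))
    rintro η ⟨hη, hlen⟩
    rcases Nat.lt_or_ge η.length (N + 1) with h | h
    · exact Or.inl ⟨hη, by omega⟩
    · have hlN : η.length = N + 1 := by omega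
      right
      refine ⟨(η.dropLast, η.getD N 0), ⟨⟨?_, ?_⟩, ?_⟩, (eq_dropLast_concat hlN).symm⟩
      · exact isHNode_prefix hη (List.dropLast_prefix η)
      · rw [List.length_dropLast]; omega
      · exact hη N (by omega)

lemma ncard_sprod {α β : Type*} (s : Set α) (t : Set β) :
    (s ×ˢ t).ncard = s.ncard * t.ncard := by
  rw [← Nat.card_coe_set_eq, ← Nat.card_coe_set_eq, ← Nat.card_coe_set_eq,
    Nat.card_congr (Equiv.Set.prod s t), Nat.card_prod]

lemma concat_injective : Function.Injective (fun p : Node × ℕ => p.1 ++ [p.2]) := by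
  rintro ⟨l, k⟩ ⟨l', k'⟩ h
  simp only at h
  obtain ⟨h1, h2⟩ := List.append_inj' h rfl
  simp only [List.cons.injEq] at h2
  simp [h1, h2.1]

/-- Extensions of `η` to level `b` within the full `H`-tree. -/
def extSet (H : ℕ → ℕ) (η : Node) (b : ℕ) : Set Node :=
  {ν : Node | IsHNode H ν ∧ ν.length = b ∧ η <+: ν}

lemma extSet_finite (H : ℕ → ℕ) (η : Node) (b : ℕ) : (extSet H η b).Finite :=
  (hnodes_finite H b).subset (fun ν hν => ⟨hν.1, le_of_eq hν.2.1⟩)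

lemma prefix_take_of_prefix {η ν : Node} {m : ℕ} (h : η <+: ν) (hm : η.length ≤ m) :
    η <+: ν.take m := by
  rw [List.prefix_iff_eq_take] at h ⊢
  rw [List.take_take, inf_eq_left.mpr hm]
  exact h

lemma extSet_succ {H : ℕ → ℕ} {η : Node} {b : ℕ} (hb : η.length ≤ b) :
    extSet H η (b + 1) =
      (fun p : Node × ℕ => p.1 ++ [p.2]) '' ((extSet H η b) ×ˢ (Set.Iio (H b))) := by
  ext ξ
  constructor
  · rintro ⟨hξ, hlen, hpre⟩
    refine ⟨(ξ.dropLast, ξ.getD b 0), ⟨⟨?_, ?_, ?_⟩, ?_⟩, (eq_dropLast_concat hlen).symm⟩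
    · exact isHNode_prefix hξ (List.dropLast_prefix ξ)
    · rw [List.length_dropLast]; omega
    · show η <+: ξ.dropLast
      have h1 : ξ.dropLast = ξ.take b := by
        rw [List.dropLast_eq_take, hlen]
        norm_num
      rw [h1]
      exact prefix_take_of_prefix hpre hb
    · exact hξ b (by omega)
  · rintro ⟨⟨ν, k⟩, ⟨⟨hν, hlν, hpν⟩, hk⟩, rfl⟩
    simp only at hν hlν hpν hk
    show IsHNode H (ν ++ [k]) ∧ (ν ++ [k]).length = b + 1 ∧ η <+: (ν ++ [k])
    have hl : (ν ++ [k]).length = b + 1 := by simp [hlν]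
    refine ⟨?_, hl, hpν.trans (List.prefix_append ν [k])⟩
    intro i hi
    rw [hl] at hi
    rcases Nat.lt_or_ge i b with h | h
    · have h' : i < ν.length := by omega
      rw [List.getD_append ν [k] 0 i h']
      exact hν i h'
    · have hib : i = b := by omega
      rw [hib]
      have h' : ν.length ≤ b := by omega
      rw [List.getD_append_right ν [k] 0 b h', hlν]
      simpa using hk

lemma ncard_Iio (k : ℕ) : (Set.Iio k).ncard = k := by
  rw [← Finset.coe_range, Set.ncard_coe_finset, Finset.card_range]

lemma extSet_ncard {H : ℕ → ℕ} {η : Node} (hη : IsHNode H η) :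
    ∀ b, η.length ≤ b → (extSet H η b).ncard = ∏ i ∈ Finset.Ico η.length b, H i := by
  intro b hb
  induction b, hb using Nat.le_induction with
  | base =>
    have he : extSet H η η.length = {η} := by
      ext ν
      constructor
      · rintro ⟨-, hl, hp⟩
        exact hp.eq_of_length (by omega) |>.symm
      · rintro rfl
        exact ⟨hη, rfl, List.prefix_rfl⟩
    rw [he, Set.ncard_singleton, Finset.Ico_self, Finset.prod_empty]
  | succ b hb ih =>
    rw [extSet_succ hb, Set.ncard_image_of_injective _ concat_injective, ncard_sprod,
      ncard_Iio, ih, Finset.prod_Ico_succ_top hb]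

lemma levelSet_subset_extSet {H : ℕ → ℕ} {T : Set Node} (hT : ∀ η ∈ T, IsHNode H η) (b : ℕ) :
    levelSet T b ⊆ extSet H ([] : Node) b :=
  fun η hη => ⟨hT η hη.1, hη.2, List.nil_prefix⟩

lemma levelSet_finite {H : ℕ → ℕ} {T : Set Node} (hT : ∀ η ∈ T, IsHNode H η) (b : ℕ) :
    (levelSet T b).Finite :=
  (extSet_finite H [] b).subset (levelSet_subset_extSet hT b)

lemma levelSet_ncard_le {H : ℕ → ℕ} {T : Set Node} (hT : ∀ η ∈ T, IsHNode H η) (b : ℕ) :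
    (levelSet T b).ncard ≤ ∏ i ∈ Finset.range b, H i := by
  have h := Set.ncard_le_ncard (levelSet_subset_extSet hT b) (extSet_finite H [] b)
  rw [extSet_ncard (by intro i hi; simp at hi) b (by simp)] at h
  simp only [List.length_nil] at h
  rwa [Finset.range_eq_Ico]

lemma levelSet_succ_subset {H : ℕ → ℕ} {T : Set Node} (hT : IsTreeSet T)
    (hH' : ∀ η ∈ T, IsHNode H η) (b : ℕ) :
    levelSet T (b + 1) ⊆
      (fun p : Node × ℕ => p.1 ++ [p.2]) '' ((levelSet T b) ×ˢ (Set.Iio (H b))) := by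
  rintro ξ ⟨hξT, hlen⟩
  refine ⟨(ξ.dropLast, ξ.getD b 0), ⟨⟨?_, ?_⟩, ?_⟩, (eq_dropLast_concat hlen).symm⟩
  · exact hT.2 ξ hξT _ (List.dropLast_prefix ξ)
  · rw [List.length_dropLast]; omega
  · exact hH' ξ hξT b (by omega)

lemma levelSet_count_mono {H : ℕ → ℕ} {T : Set Node} (hT : IsTreeSet T)
    (hH' : ∀ η ∈ T, IsHNode H η) {m n : ℕ} (hmn : m ≤ n) :
    (levelSet T n).ncard ≤ (levelSet T m).ncard * ∏ i ∈ Finset.Ico m n, H i := by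
  induction n, hmn using Nat.le_induction with
  | base => rw [Finset.Ico_self, Finset.prod_empty, mul_one]
  | succ n hn ih =>
    have hfin : ((fun p : Node × ℕ => p.1 ++ [p.2]) ''
        ((levelSet T n) ×ˢ (Set.Iio (H n)))).Finite :=
      ((levelSet_finite hH' n).prod (Set.finite_Iio (H n))).image _
    calc (levelSet T (n + 1)).ncard
        ≤ ((fun p : Node × ℕ => p.1 ++ [p.2]) ''
            ((levelSet T n) ×ˢ (Set.Iio (H n)))).ncard :=
          Set.ncard_le_ncard (levelSet_succ_subset hT hH' n) hfin
      _ ≤ (levelSet T n).ncard * H n := by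
          rw [Set.ncard_image_of_injective _ concat_injective, ncard_sprod, ncard_Iio]
      _ ≤ ((levelSet T m).ncard * ∏ i ∈ Finset.Ico m n, H i) * H n :=
          Nat.mul_le_mul_right _ ih
      _ = (levelSet T m).ncard * ∏ i ∈ Finset.Ico m (n + 1), H i := by
          rw [Finset.prod_Ico_succ_top hn, mul_assoc]

lemma density_mono_nat {H : ℕ → ℕ} {T : Set Node} (hT : IsTreeSet T)
    (hH' : ∀ η ∈ T, IsHNode H η) {m n : ℕ} (hmn : m ≤ n) :
    (levelSet T n).ncard * ∏ i ∈ Finset.range m, H i ≤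
      (levelSet T m).ncard * ∏ i ∈ Finset.range n, H i := by
  calc (levelSet T n).ncard * ∏ i ∈ Finset.range m, H i
      ≤ ((levelSet T m).ncard * ∏ i ∈ Finset.Ico m n, H i) * ∏ i ∈ Finset.range m, H i :=
        Nat.mul_le_mul_right _ (levelSet_count_mono hT hH' hmn)
    _ = (levelSet T m).ncard * ((∏ i ∈ Finset.range m, H i) * ∏ i ∈ Finset.Ico m n, H i) := by
        ring
    _ = (levelSet T m).ncard * ∏ i ∈ Finset.range n, H i := by
        rw [Finset.prod_range_mul_prod_Ico _ hmn]

lemma prod_pos_real {H : ℕ → ℕ} (hH : ∀ n, 2 ≤ H n) (n : ℕ) :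
    (0:ℝ) < ∏ i ∈ Finset.range n, (H i : ℝ) := by
  apply Finset.prod_pos
  intro i _
  have := hH i
  positivity

lemma density_mono_real {H : ℕ → ℕ} (hH : ∀ n, 2 ≤ H n) {T : Set Node} (hT : IsTreeSet T)
    (hH' : ∀ η ∈ T, IsHNode H η) {m n : ℕ} (hmn : m ≤ n) :
    ((levelSet T n).ncard : ℝ) / ∏ i ∈ Finset.range n, (H i : ℝ) ≤
      ((levelSet T m).ncard : ℝ) / ∏ i ∈ Finset.range m, (H i : ℝ) := by
  rw [div_le_div_iff₀ (prod_pos_real hH n) (prod_pos_real hH m)]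
  have := density_mono_nat hT hH' hmn
  have hcast : ((levelSet T n).ncard * ∏ i ∈ Finset.range m, H i : ℕ) ≤
      ((levelSet T m).ncard * ∏ i ∈ Finset.range n, H i : ℕ) := this
  calc ((levelSet T n).ncard : ℝ) * ∏ i ∈ Finset.range m, (H i : ℝ)
      = (((levelSet T n).ncard * ∏ i ∈ Finset.range m, H i : ℕ) : ℝ) := by push_cast; ring
    _ ≤ (((levelSet T m).ncard * ∏ i ∈ Finset.range n, H i : ℕ) : ℝ) := by exact_mod_cast hcast
    _ = ((levelSet T m).ncard : ℝ) * ∏ i ∈ Finset.range n, (H i : ℝ) := by push_cast; ring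

lemma finTree_level_eq {H : ℕ → ℕ} {S : Set Node} {N N' : ℕ}
    (h1 : IsFinTree H S N) (h2 : IsFinTree H S N') : N = N' := by
  obtain ⟨ν, hν, -, hlen⟩ := h1.2.2 [] h1.1.1
  obtain ⟨ν', hν', -, hlen'⟩ := h2.2.2 [] h2.1.1
  have b1 := (h2.2.1 ν hν).2
  have b2 := (h1.2.1 ν' hν').2
  omega

lemma root_finTree (H : ℕ → ℕ) : IsFinTree H ({([] : Node)} : Set Node) 0 := by
  refine ⟨⟨rfl, ?_⟩, ?_, ?_⟩
  · intro η hη ν hν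
    simp only [Set.mem_singleton_iff] at hη
    subst hη
    rw [List.prefix_nil] at hν
    simp [hν]
  · intro η hη
    simp only [Set.mem_singleton_iff] at hη
    subst hη
    exact ⟨fun i hi => by simp at hi, le_refl _⟩
  · intro η hη
    simp only [Set.mem_singleton_iff] at hη
    subst hη
    exact ⟨[], rfl, List.prefix_rfl, rfl⟩

lemma mem_Gcmz {H : ℕ → ℕ} {S : Set Node} {a b : ℕ} :
    (S, a, b) ∈ Gcmz H ↔ ∃ N, IsFinTree H S N ∧ a ≤ b ∧ b ≤ N ∧
      ((levelSet S b).ncard : ℝ) / (∏ i ∈ Finset.range b, (H i : ℝ)) ≤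
        ∑ i ∈ Finset.Icc a b, 1 / ((i : ℝ) + 1) ^ 2 := by
  constructor
  · rintro (h | ⟨S', a', b', N, heq, h1, h2, h3, h4⟩)
    · simp only [Prod.mk.injEq] at h
      obtain ⟨hS, ha, hb⟩ := h
      subst hS; subst ha; subst hb
      refine ⟨0, root_finTree H, le_refl _, le_refl _, ?_⟩
      have hl : levelSet ({([] : Node)} : Set Node) 0 = {([] : Node)} := by
        ext η
        simp only [levelSet, Set.mem_sep_iff, Set.mem_singleton_iff]
        constructor
        · rintro ⟨h, -⟩; exact h
        · rintro rfl; exact ⟨rfl, rfl⟩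
      rw [hl, Set.ncard_singleton]
      norm_num
    · simp only [Prod.mk.injEq] at heq
      obtain ⟨hS, ha, hb⟩ := heq
      subst hS; subst ha; subst hb
      exact ⟨N, h1, h2, h3, h4⟩
  · rintro ⟨N, h1, h2, h3, h4⟩
    show _ ∨ _
    exact Or.inr ⟨S, a, b, N, rfl, h1, h2, h3, h4⟩

lemma isHNode_append_replicate {H : ℕ → ℕ} (hH : ∀ n, 2 ≤ H n) {η : Node}
    (hη : IsHNode H η) (j : ℕ) : IsHNode H (η ++ List.replicate j 0) := by
  intro i hi
  rw [List.length_append, List.length_replicate] at hi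
  rcases Nat.lt_or_ge i η.length with h | h
  · rw [List.getD_append η _ 0 i h]
    exact hη i h
  · rw [List.getD_append_right η _ 0 i h,
      List.getD_eq_getElem _ _ (by rw [List.length_replicate]; omega),
      List.getElem_replicate]
    have := hH i
    omega

lemma treeSet_union {S T : Set Node} (h1 : IsTreeSet S) (h2 : IsTreeSet T) :
    IsTreeSet (S ∪ T) := by
  refine ⟨Or.inl h1.1, ?_⟩
  rintro η (h | h) ν hp
  · exact Or.inl (h1.2 η h ν hp)
  · exact Or.inr (h2.2 η h ν hp)

lemma finTree_union {H : ℕ → ℕ} {S T : Set Node} {N : ℕ}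
    (h1 : IsFinTree H S N) (h2 : IsFinTree H T N) : IsFinTree H (S ∪ T) N := by
  refine ⟨treeSet_union h1.1 h2.1, ?_, ?_⟩
  · rintro η (h | h)
    · exact h1.2.1 η h
    · exact h2.2.1 η h
  · rintro η (h | h)
    · obtain ⟨ν, hν, hp, hl⟩ := h1.2.2 η h
      exact ⟨ν, Or.inl hν, hp, hl⟩
    · obtain ⟨ν, hν, hp, hl⟩ := h2.2.2 η h
      exact ⟨ν, Or.inr hν, hp, hl⟩

lemma levelSet_union (S T : Set Node) (n : ℕ) :
    levelSet (S ∪ T) n = levelSet S n ∪ levelSet T n := by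
  ext η
  simp only [levelSet, Set.mem_union, Set.mem_setOf_eq]
  tauto

lemma levelSet_mono {S T : Set Node} (h : S ⊆ T) (n : ℕ) :
    levelSet S n ⊆ levelSet T n := fun η hη => ⟨h hη.1, hη.2⟩

/-- The set of zero-extensions of members of `A` by at most `m` zeros. -/
def zext (A : Set Node) (m : ℕ) : Set Node :=
  {ν | ∃ η ∈ A, ∃ j, j ≤ m ∧ ν = η ++ List.replicate j 0}

lemma zext_finTree {H : ℕ → ℕ} {S : Set Node} {M N : ℕ}
    (hH : ∀ n, 2 ≤ H n) (hS : IsFinTree H S M) (hMN : M ≤ N) :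
    IsFinTree H (S ∪ zext (levelSet S M) (N - M)) N := by
  constructor
  · -- tree set
    refine ⟨Or.inl hS.1.1, ?_⟩
    rintro η (h | h) ν hp
    · exact Or.inl (hS.1.2 η h ν hp)
    · obtain ⟨ρ, hρ, j, hj, rfl⟩ := h
      have hρM : ρ.length = M := hρ.2
      have hνle : ν.length ≤ M + j := by
        have := hp.length_le
        rw [List.length_append, List.length_replicate] at this
        omega
      rcases le_or_gt ν.length M with hc | hc
      · left
        have h1 : ν <+: (ρ ++ List.replicate j 0).take M := prefix_take_of_prefix hp hc
        rw [show M = ρ.length from hρM.symm, List.take_left] at h1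
        exact hS.1.2 ρ hρ.1 ν h1
      · right
        refine ⟨ρ, hρ, ν.length - M, by omega, ?_⟩
        have h1 : ν = (ρ ++ List.replicate j 0).take ν.length :=
          List.prefix_iff_eq_take.mp hp
        rw [List.take_append, List.take_of_length_le (by omega),
          List.take_replicate, hρM] at h1
        have hmin : (ν.length - M) ⊓ j = ν.length - M := inf_eq_left.mpr (by omega)
        rw [hmin] at h1
        exact h1
  constructor
  · -- node bounds
    rintro η (h | h)
    · exact ⟨(hS.2.1 η h).1, le_trans (hS.2.1 η h).2 hMN⟩
    · obtain ⟨ρ, hρ, j, hj, rfl⟩ := h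
      refine ⟨isHNode_append_replicate hH (hS.2.1 ρ hρ.1).1 j, ?_⟩
      rw [List.length_append, List.length_replicate, hρ.2]
      omega
  · -- extension
    rintro η (h | h)
    · obtain ⟨ν, hν, hp, hl⟩ := hS.2.2 η h
      refine ⟨ν ++ List.replicate (N - M) 0, Or.inr ⟨ν, ⟨hν, hl⟩, N - M, le_refl _, rfl⟩,
        hp.trans (List.prefix_append _ _), ?_⟩
      rw [List.length_append, List.length_replicate, hl]
      omega
    · obtain ⟨ρ, hρ, j, hj, rfl⟩ := h
      refine ⟨ρ ++ List.replicate (N - M) 0, Or.inr ⟨ρ, hρ, N - M, le_refl _, rfl⟩, ?_, ?_⟩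
      · refine ⟨List.replicate (N - M - j) 0, ?_⟩
        rw [List.append_assoc, ← List.replicate_add]
        congr 2
        omega
      · rw [List.length_append, List.length_replicate, hρ.2]
        omega

lemma zext_level_eq {S : Set Node} {M : ℕ} (hlen : ∀ η ∈ S, η.length ≤ M) (m : ℕ) :
    levelSet (S ∪ zext (levelSet S M) m) M = levelSet S M := by
  rw [levelSet_union]
  apply Set.union_eq_self_of_subset_right
  rintro ν ⟨hν, hl⟩
  obtain ⟨ρ, hρ, j, hj, rfl⟩ := hν
  have := hρ.2
  rw [List.length_append, List.length_replicate] at hl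
  have hj0 : j = 0 := by omega
  subst hj0
  simpa using hρ

lemma zext_level_subset {S : Set Node} {M : ℕ} (hlen : ∀ η ∈ S, η.length ≤ M) (m : ℕ)
    {k : ℕ} (hk : M < k) :
    levelSet (S ∪ zext (levelSet S M) m) k ⊆
      (fun ρ => ρ ++ List.replicate (k - M) 0) '' levelSet S M := by
  rintro ν ⟨hν, hl⟩
  rcases hν with h | h
  · have := hlen ν h
    omega
  · obtain ⟨ρ, hρ, j, hj, rfl⟩ := h
    have hρM := hρ.2
    rw [List.length_append, List.length_replicate] at hl
    refine ⟨ρ, hρ, ?_⟩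
    simp only
    congr 2
    omega

/-- The set of initial segments of a node. -/
def takeSet (η : Node) (N : ℕ) : Set Node := {ν | ∃ j, j ≤ N ∧ ν = η.take j}

lemma takeSet_finTree {H : ℕ → ℕ} {η : Node} {N : ℕ} (hη : IsHNode H η)
    (hlen : η.length = N) : IsFinTree H (takeSet η N) N := by
  have hself : η ∈ takeSet η N := ⟨N, le_refl _, by rw [← hlen, List.take_length]⟩
  refine ⟨⟨⟨0, Nat.zero_le _, rfl⟩, ?_⟩, ?_, ?_⟩
  · rintro ξ ⟨j, hj, rfl⟩ ν hp
    refine ⟨ν.length, ?_, ?_⟩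
    · have h1 := hp.length_le
      rw [List.length_take, hlen] at h1
      omega
    · have h1 : ν = (η.take j).take ν.length := List.prefix_iff_eq_take.mp hp
      rw [List.take_take] at h1
      have h2 : ν.length ⊓ j = ν.length := by
        have := hp.length_le
        rw [List.length_take] at this
        exact inf_eq_left.mpr (by omega)
      rwa [h2] at h1
  · rintro ξ ⟨j, hj, rfl⟩
    refine ⟨isHNode_prefix hη (List.take_prefix j η), ?_⟩
    rw [List.length_take]
    omega
  · rintro ξ ⟨j, hj, rfl⟩
    exact ⟨η, hself, List.take_prefix j η, hlen⟩

lemma takeSet_level {η : Node} {N : ℕ} (hlen : η.length = N) {k : ℕ} (hk : k ≤ N) :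
    levelSet (takeSet η N) k = {η.take k} := by
  ext ν
  simp only [levelSet, Set.mem_sep_iff, Set.mem_singleton_iff]
  constructor
  · rintro ⟨⟨j, hj, rfl⟩, hl⟩
    rw [List.length_take, hlen] at hl
    have : j = k := by omega
    rw [this]
  · rintro rfl
    exact ⟨⟨k, hk, rfl⟩, by rw [List.length_take]; omega⟩

lemma cast_prod_real (H : ℕ → ℕ) (b : ℕ) :
    ((∏ i ∈ Finset.range b, H i : ℕ) : ℝ) = ∏ i ∈ Finset.range b, (H i : ℝ) := by
  push_cast
  rfl

lemma prod_range_one_le {H : ℕ → ℕ} (hH : ∀ n, 2 ≤ H n) (b : ℕ) :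
    1 ≤ ∏ i ∈ Finset.range b, H i :=
  Finset.one_le_prod' (fun i _ => by have := hH i; omega)

lemma two_pow_le_prod_Ico {H : ℕ → ℕ} (hH : ∀ n, 2 ≤ H n) (m n : ℕ) :
    2 ^ (n - m) ≤ ∏ i ∈ Finset.Ico m n, H i := by
  have := Finset.pow_card_le_prod (Finset.Ico m n) H 2 (fun i _ => hH i)
  rwa [Nat.card_Ico] at this

lemma two_pow_le_prod_range {H : ℕ → ℕ} (hH : ∀ n, 2 ≤ H n) (n : ℕ) :
    2 ^ n ≤ ∏ i ∈ Finset.range n, H i := by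
  have := Finset.pow_card_le_prod (Finset.range n) H 2 (fun i _ => hH i)
  rwa [Finset.card_range] at this

lemma levelSet_sub_of {H : ℕ → ℕ} {S0 S1 : Set Node} {N0 N1 b0 : ℕ}
    (hf1 : IsFinTree H S1 N1) (hsub : levelSet S1 N0 ⊆ S0) (ht0 : IsTreeSet S0)
    (hb : b0 ≤ N0) (hN : N0 ≤ N1) : levelSet S1 b0 ⊆ levelSet S0 b0 := by
  rintro η ⟨hη, hlen⟩
  obtain ⟨ν, hν, hpre, hlenν⟩ := hf1.2.2 η hη
  have h1' : ν.take N0 ∈ S1 := hf1.1.2 ν hν _ (List.take_prefix _ _)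
  have hl : (ν.take N0).length = N0 := by rw [List.length_take]; omega
  have hmem : ν.take N0 ∈ S0 := hsub ⟨h1', hl⟩
  have hp2 : η <+: ν.take N0 := prefix_take_of_prefix hpre (by omega)
  exact ⟨ht0.2 _ hmem η hp2, hlen⟩

lemma sum_nonneg_aux (s : Finset ℕ) : 0 ≤ ∑ i ∈ s, (1:ℝ) / ((i:ℝ) + 1) ^ 2 :=
  Finset.sum_nonneg (fun i _ => by positivity)

/-- Monotonicity axiom for `Gcmz`. -/
lemma gcmz_mono {H : ℕ → ℕ} (hH : ∀ n, 2 ≤ H n) :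
    ∀ S0 a0 b0 N0 S1 N1, (S0, a0, b0) ∈ Gcmz H → IsFinTree H S0 N0 →
    IsFinTree H S1 N1 → N0 ≤ N1 → levelSet S1 N0 ⊆ S0 →
    ∀ a1 b1, a1 ≤ a0 → b0 ≤ b1 → b1 ≤ N1 → (S1, a1, b1) ∈ Gcmz H := by
  intro S0 a0 b0 N0 S1 N1 h0 hf0 hf1 hNN hsub a1 b1 ha hb hbN
  obtain ⟨N', hf0', hab0, hb0N', hdens0⟩ := mem_Gcmz.mp h0
  have hNeq : N' = N0 := finTree_level_eq hf0' hf0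
  subst hNeq
  have hnodes1 : ∀ η ∈ S1, IsHNode H η := fun η h => (hf1.2.1 η h).1
  have hnodes0 : ∀ η ∈ S0, IsHNode H η := fun η h => (hf0.2.1 η h).1
  apply mem_Gcmz.mpr
  refine ⟨N1, hf1, le_trans ha (le_trans hab0 hb), hbN, ?_⟩
  have d1 : ((levelSet S1 b1).ncard : ℝ) / ∏ i ∈ Finset.range b1, (H i : ℝ) ≤
      ((levelSet S1 b0).ncard : ℝ) / ∏ i ∈ Finset.range b0, (H i : ℝ) :=
    density_mono_real hH hf1.1 hnodes1 hb
  have hsub0 : levelSet S1 b0 ⊆ levelSet S0 b0 :=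
    levelSet_sub_of hf1 hsub hf0.1 hb0N' hNN
  have d2 : ((levelSet S1 b0).ncard : ℝ) ≤ ((levelSet S0 b0).ncard : ℝ) := by
    exact_mod_cast Set.ncard_le_ncard hsub0 (levelSet_finite hnodes0 b0)
  have d3 : ((levelSet S1 b0).ncard : ℝ) / ∏ i ∈ Finset.range b0, (H i : ℝ) ≤
      ((levelSet S0 b0).ncard : ℝ) / ∏ i ∈ Finset.range b0, (H i : ℝ) := by
    gcongr
  have d4 : ∑ i ∈ Finset.Icc a0 b0, (1:ℝ) / ((i:ℝ) + 1) ^ 2 ≤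
      ∑ i ∈ Finset.Icc a1 b1, (1:ℝ) / ((i:ℝ) + 1) ^ 2 :=
    Finset.sum_le_sum_of_subset_of_nonneg (Finset.Icc_subset_Icc ha hb)
      (fun i _ _ => by positivity)
  calc ((levelSet S1 b1).ncard : ℝ) / ∏ i ∈ Finset.range b1, (H i : ℝ)
      ≤ ((levelSet S1 b0).ncard : ℝ) / ∏ i ∈ Finset.range b0, (H i : ℝ) := d1
    _ ≤ ((levelSet S0 b0).ncard : ℝ) / ∏ i ∈ Finset.range b0, (H i : ℝ) := d3
    _ ≤ ∑ i ∈ Finset.Icc a0 b0, (1:ℝ) / ((i:ℝ) + 1) ^ 2 := hdens0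
    _ ≤ ∑ i ∈ Finset.Icc a1 b1, (1:ℝ) / ((i:ℝ) + 1) ^ 2 := d4

/-- `b1 < FH b1` under the growth hypothesis. -/
lemma lt_FH {H FH : ℕ → ℕ} (hH : ∀ n, 2 ≤ H n)
    (hFH2 : ∀ n, (n + 1) ^ 2 * ∏ i ∈ Finset.range (n + 1), H i < FH n) (n : ℕ) :
    n < FH n := by
  have h1 := hFH2 n
  have h2 := prod_range_one_le hH (n + 1)
  nlinarith

/-- Amalgamation axiom for `Gcmz`. -/
lemma gcmz_amalg {H FH : ℕ → ℕ} (hH : ∀ n, 2 ≤ H n)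
    (hFH2 : ∀ n, (n + 1) ^ 2 * ∏ i ∈ Finset.range (n + 1), H i < FH n) :
    ∀ S0 a0 b0 S1 a1 b1 N S M,
    (S0, a0, b0) ∈ Gcmz H → (S1, a1, b1) ∈ Gcmz H →
    IsFinTree H S0 N → IsFinTree H S1 N → IsFinTree H S M → M < N →
    levelSet S0 M ⊆ S → levelSet S1 M ⊆ S →
    M < a0 → b0 < a1 → FH b1 < N →
    ∃ S', (S', a0, FH b1) ∈ Gcmz H ∧ IsFinTree H S' N ∧
      S0 ∪ S1 ⊆ S' ∧ levelSet S' M = levelSet S M := by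
  intro S0 a0 b0 S1 a1 b1 N S M h0 h1 hf0 hf1 hfS hMN hsub0 hsub1 hMa0 hb0a1 hFHN
  obtain ⟨N0', hf0', hab0, hb0N0, hd0⟩ := mem_Gcmz.mp h0
  rw [finTree_level_eq hf0' hf0] at hb0N0
  obtain ⟨N1', hf1', hab1, hb1N1, hd1⟩ := mem_Gcmz.mp h1
  rw [finTree_level_eq hf1' hf1] at hb1N1
  set b := FH b1 with hbdef
  have hb1b : b1 < b := lt_FH hH hFH2 b1
  have hb1pos : 1 ≤ b1 := by omega
  have hMb1 : M ≤ b1 := by omega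
  have hlenS : ∀ η ∈ S, η.length ≤ M := fun η h => (hfS.2.1 η h).2
  have hnodesS : ∀ η ∈ S, IsHNode H η := fun η h => (hfS.2.1 η h).1
  have hnodes0 : ∀ η ∈ S0, IsHNode H η := fun η h => (hf0.2.1 η h).1
  have hnodes1 : ∀ η ∈ S1, IsHNode H η := fun η h => (hf1.2.1 η h).1
  set Z := zext (levelSet S M) (N - M) with hZdef
  set S' := (S0 ∪ S1) ∪ (S ∪ Z) with hS'def
  have hzfin : IsFinTree H (S ∪ Z) N := zext_finTree hH hfS (by omega)
  have hfS' : IsFinTree H S' N := finTree_union (finTree_union hf0 hf1) hzfin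
  have hnodesS' : ∀ η ∈ S', IsHNode H η := fun η h => (hfS'.2.1 η h).1
  refine ⟨S', ?_, hfS', Set.subset_union_left, ?_⟩
  · -- membership in Gcmz
    apply mem_Gcmz.mpr
    refine ⟨N, hfS', by omega, by omega, ?_⟩
    -- counting at level b
    have hMb : M < b := by omega
    have hsplit : levelSet S' b ⊆ (levelSet S0 b ∪ levelSet S1 b) ∪
        ((fun ρ => ρ ++ List.replicate (b - M) 0) '' levelSet S M) := by
      rw [hS'def, levelSet_union, levelSet_union]
      exact Set.union_subset_union_right _ (zext_level_subset hlenS (N - M) hMb)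
    have hfin0 := levelSet_finite hnodes0 b
    have hfin1 := levelSet_finite hnodes1 b
    have hfinS := levelSet_finite hnodesS M
    have hcard : (levelSet S' b).ncard ≤
        (levelSet S0 b).ncard + (levelSet S1 b).ncard + (levelSet S M).ncard := calc
      (levelSet S' b).ncard ≤ ((levelSet S0 b ∪ levelSet S1 b) ∪
          ((fun ρ => ρ ++ List.replicate (b - M) 0) '' levelSet S M)).ncard :=
        Set.ncard_le_ncard hsplit (((hfin0.union hfin1)).union (hfinS.image _))
      _ ≤ (levelSet S0 b ∪ levelSet S1 b).ncard +
          ((fun ρ => ρ ++ List.replicate (b - M) 0) '' levelSet S M).ncard :=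
        Set.ncard_union_le _ _
      _ ≤ ((levelSet S0 b).ncard + (levelSet S1 b).ncard) + (levelSet S M).ncard :=
        add_le_add (Set.ncard_union_le _ _) (Set.ncard_image_le hfinS)
      _ = (levelSet S0 b).ncard + (levelSet S1 b).ncard + (levelSet S M).ncard := rfl
    -- ℕ bound for the zero-extension part
    have hPM : (levelSet S M).ncard ≤ ∏ i ∈ Finset.range M, H i :=
      levelSet_ncard_le hnodesS M
    have hnum : (b + 1) ^ 2 ≤ 2 ^ (b - M) := by
      apply numeric1 (t := b1 + 1) (by omega) (by omega)
      calc (b1 + 1) ^ 2 * 2 ^ (b1 + 1)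
          ≤ (b1 + 1) ^ 2 * ∏ i ∈ Finset.range (b1 + 1), H i :=
            Nat.mul_le_mul_left _ (two_pow_le_prod_range hH (b1 + 1))
        _ < FH b1 := hFH2 b1
    have hPMb : (∏ i ∈ Finset.range M, H i) * (b + 1) ^ 2 ≤ ∏ i ∈ Finset.range b, H i := by
      calc (∏ i ∈ Finset.range M, H i) * (b + 1) ^ 2
          ≤ (∏ i ∈ Finset.range M, H i) * 2 ^ (b - M) := Nat.mul_le_mul_left _ hnum
        _ ≤ (∏ i ∈ Finset.range M, H i) * ∏ i ∈ Finset.Ico M b, H i :=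
            Nat.mul_le_mul_left _ (two_pow_le_prod_Ico hH M b)
        _ = ∏ i ∈ Finset.range b, H i := Finset.prod_range_mul_prod_Ico _ (by omega)
    -- real inequalities
    have hPbpos := prod_pos_real hH b
    have dens0 : ((levelSet S0 b).ncard : ℝ) / ∏ i ∈ Finset.range b, (H i : ℝ) ≤
        ∑ i ∈ Finset.Icc a0 b0, (1:ℝ) / ((i:ℝ) + 1) ^ 2 :=
      le_trans (density_mono_real hH hf0.1 hnodes0 (by omega)) hd0
    have dens1 : ((levelSet S1 b).ncard : ℝ) / ∏ i ∈ Finset.range b, (H i : ℝ) ≤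
        ∑ i ∈ Finset.Icc a1 b1, (1:ℝ) / ((i:ℝ) + 1) ^ 2 :=
      le_trans (density_mono_real hH hf1.1 hnodes1 (by omega)) hd1
    have densZ : ((levelSet S M).ncard : ℝ) / ∏ i ∈ Finset.range b, (H i : ℝ) ≤
        1 / ((b:ℝ) + 1) ^ 2 := by
      rw [div_le_div_iff₀ hPbpos (by positivity), one_mul]
      have hn : (levelSet S M).ncard * (b + 1) ^ 2 ≤ ∏ i ∈ Finset.range b, H i :=
        le_trans (Nat.mul_le_mul_right _ hPM) hPMb
      calc ((levelSet S M).ncard : ℝ) * ((b:ℝ) + 1) ^ 2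
          = (((levelSet S M).ncard * (b + 1) ^ 2 : ℕ) : ℝ) := by push_cast; ring
        _ ≤ ((∏ i ∈ Finset.range b, H i : ℕ) : ℝ) := by exact_mod_cast hn
        _ = ∏ i ∈ Finset.range b, (H i : ℝ) := cast_prod_real H b
    -- sum decomposition
    have hsum : ∑ i ∈ Finset.Icc a0 b0, (1:ℝ) / ((i:ℝ) + 1) ^ 2 +
        ∑ i ∈ Finset.Icc a1 b1, (1:ℝ) / ((i:ℝ) + 1) ^ 2 + 1 / ((b:ℝ) + 1) ^ 2 ≤
        ∑ i ∈ Finset.Icc a0 b, (1:ℝ) / ((i:ℝ) + 1) ^ 2 := by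
      have hdisj1 : Disjoint (Finset.Icc a0 b0) (Finset.Icc a1 b1) := by
        rw [Finset.disjoint_left]
        intro x hx1 hx2
        rw [Finset.mem_Icc] at hx1 hx2
        omega
      have hdisj2 : Disjoint (Finset.Icc a0 b0 ∪ Finset.Icc a1 b1) ({b} : Finset ℕ) := by
        rw [Finset.disjoint_left]
        intro x hx1 hx2
        rw [Finset.mem_union, Finset.mem_Icc, Finset.mem_Icc] at hx1
        rw [Finset.mem_singleton] at hx2
        omega
      have e1 : ∑ i ∈ (Finset.Icc a0 b0 ∪ Finset.Icc a1 b1) ∪ {b},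
          (1:ℝ) / ((i:ℝ) + 1) ^ 2 =
          ∑ i ∈ Finset.Icc a0 b0, (1:ℝ) / ((i:ℝ) + 1) ^ 2 +
          ∑ i ∈ Finset.Icc a1 b1, (1:ℝ) / ((i:ℝ) + 1) ^ 2 + 1 / ((b:ℝ) + 1) ^ 2 := by
        rw [Finset.sum_union hdisj2, Finset.sum_union hdisj1, Finset.sum_singleton]
      rw [← e1]
      apply Finset.sum_le_sum_of_subset_of_nonneg
      · intro x hx
        rw [Finset.mem_union, Finset.mem_union, Finset.mem_Icc, Finset.mem_Icc,
          Finset.mem_singleton] at hx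
        rw [Finset.mem_Icc]
        omega
      · intro i _ _
        positivity
    -- assemble
    have hcardR : ((levelSet S' b).ncard : ℝ) ≤
        ((levelSet S0 b).ncard : ℝ) + ((levelSet S1 b).ncard : ℝ) +
        ((levelSet S M).ncard : ℝ) := by exact_mod_cast hcard
    calc ((levelSet S' b).ncard : ℝ) / ∏ i ∈ Finset.range b, (H i : ℝ)
        ≤ (((levelSet S0 b).ncard : ℝ) + ((levelSet S1 b).ncard : ℝ) +
            ((levelSet S M).ncard : ℝ)) / ∏ i ∈ Finset.range b, (H i : ℝ) := by
          gcongr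
      _ = ((levelSet S0 b).ncard : ℝ) / (∏ i ∈ Finset.range b, (H i : ℝ)) +
          ((levelSet S1 b).ncard : ℝ) / (∏ i ∈ Finset.range b, (H i : ℝ)) +
          ((levelSet S M).ncard : ℝ) / (∏ i ∈ Finset.range b, (H i : ℝ)) := by
          ring
      _ ≤ ∑ i ∈ Finset.Icc a0 b0, (1:ℝ) / ((i:ℝ) + 1) ^ 2 +
          ∑ i ∈ Finset.Icc a1 b1, (1:ℝ) / ((i:ℝ) + 1) ^ 2 + 1 / ((b:ℝ) + 1) ^ 2 := by
          exact add_le_add (add_le_add dens0 dens1) densZ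
      _ ≤ ∑ i ∈ Finset.Icc a0 b, (1:ℝ) / ((i:ℝ) + 1) ^ 2 := hsum
  · -- level sets at M agree
    rw [hS'def, levelSet_union, levelSet_union, zext_level_eq hlenS]
    have e0 : levelSet S0 M ⊆ levelSet S M := fun η hη => ⟨hsub0 hη, hη.2⟩
    have e1 : levelSet S1 M ⊆ levelSet S M := fun η hη => ⟨hsub1 hη, hη.2⟩
    rw [Set.union_eq_self_of_subset_left (Set.union_subset e0 e1)]

/-- Suitability, first condition, for `Gcmz`. -/
lemma gcmz_suit1 {H : ℕ → ℕ} (hH : ∀ n, 2 ≤ H n) (n : ℕ) :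
    ∃ N, n < N ∧ ∀ S a b NS, (S, a, b) ∈ Gcmz H → IsFinTree H S NS → N ≤ a →
      ∀ η : Node, IsHNode H η → η.length = n →
        ∃ ν : Node, IsHNode H ν ∧ ν.length = NS ∧ η <+: ν ∧ ν ∉ S := by
  set Pn := ∏ i ∈ Finset.range n, H i with hPndef
  refine ⟨Pn + n + 1, by omega, ?_⟩
  intro S a b NS hm hfin hNa η hη hηlen
  obtain ⟨N', hf', hab, hbN', hd⟩ := mem_Gcmz.mp hm
  rw [finTree_level_eq hf' hfin] at hbN'
  by_contra hcon
  push_neg at hcon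
  have hnodes : ∀ x ∈ S, IsHNode H x := fun x h => (hfin.2.1 x h).1
  have hnb : n < b := by omega
  have hnNS : n ≤ NS := by omega
  have hsubE : extSet H η NS ⊆ levelSet S NS := by
    rintro ν ⟨h1, h2, h3⟩
    exact ⟨hcon ν h1 h2 h3, h2⟩
  have c1 : (extSet H η NS).ncard = ∏ i ∈ Finset.Ico n NS, H i := by
    rw [extSet_ncard hη NS (by omega), hηlen]
  have c2 : (extSet H η NS).ncard ≤ (levelSet S NS).ncard :=
    Set.ncard_le_ncard hsubE (levelSet_finite hnodes NS)
  have c3 : (levelSet S NS).ncard ≤ (levelSet S b).ncard * ∏ i ∈ Finset.Ico b NS, H i :=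
    levelSet_count_mono hfin.1 hnodes hbN'
  -- real bound giving strict inequality
  have hPbpos := prod_pos_real hH b
  have hsum : ∑ i ∈ Finset.Icc a b, (1:ℝ) / ((i:ℝ) + 1) ^ 2 ≤ 1 / (a:ℝ) :=
    sum_inv_sq_le a b (by omega)
  have hstrict : (levelSet S b).ncard * Pn < ∏ i ∈ Finset.range b, H i := by
    have hd2 : ((levelSet S b).ncard : ℝ) ≤
        (∏ i ∈ Finset.range b, (H i : ℝ)) * (1 / (a:ℝ)) := by
      have := le_trans hd hsum
      rw [div_le_iff₀ hPbpos] at this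
      linarith [this]
    have hPa : (Pn : ℝ) < (a : ℝ) := by
      have : Pn < a := by omega
      exact_mod_cast this
    have hapos : (0:ℝ) < (a:ℝ) := by
      have : 0 < a := by omega
      exact_mod_cast this
    have hPnpos : (0:ℝ) ≤ (Pn : ℝ) := Nat.cast_nonneg _
    have key : ((levelSet S b).ncard : ℝ) * Pn < ∏ i ∈ Finset.range b, (H i : ℝ) := by
      have h1 : ((levelSet S b).ncard : ℝ) * Pn ≤
          (∏ i ∈ Finset.range b, (H i : ℝ)) * (1 / (a:ℝ)) * Pn := by
        apply mul_le_mul_of_nonneg_right hd2 hPnpos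
      have h2 : (∏ i ∈ Finset.range b, (H i : ℝ)) * (1 / (a:ℝ)) * Pn <
          ∏ i ∈ Finset.range b, (H i : ℝ) := by
        rw [mul_assoc]
        nth_rewrite 2 [← mul_one (∏ i ∈ Finset.range b, (H i : ℝ))]
        apply mul_lt_mul_of_pos_left _ hPbpos
        rw [one_div, inv_mul_lt_iff₀ hapos, mul_one]
        exact hPa
      linarith
    have : (((levelSet S b).ncard * Pn : ℕ) : ℝ) <
        ((∏ i ∈ Finset.range b, H i : ℕ) : ℝ) := by
      rw [cast_prod_real]
      push_cast
      push_cast at key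
      linarith
    exact_mod_cast this
  -- ℕ contradiction
  have hpos : 0 < ∏ i ∈ Finset.Ico b NS, H i :=
    Finset.prod_pos (fun i _ => by have := hH i; omega)
  have e1 : Pn * ∏ i ∈ Finset.Ico n NS, H i = (∏ i ∈ Finset.range b, H i) *
      ∏ i ∈ Finset.Ico b NS, H i := by
    rw [← Finset.prod_Ico_consecutive H (by omega : n ≤ b) (by omega : b ≤ NS),
      ← mul_assoc, hPndef, Finset.prod_range_mul_prod_Ico _ (by omega : n ≤ b)]
  have e2 : Pn * ∏ i ∈ Finset.Ico n NS, H i <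
      (∏ i ∈ Finset.range b, H i) * ∏ i ∈ Finset.Ico b NS, H i := by
    calc Pn * ∏ i ∈ Finset.Ico n NS, H i
        ≤ Pn * ((levelSet S b).ncard * ∏ i ∈ Finset.Ico b NS, H i) := by
          apply Nat.mul_le_mul_left
          omega
      _ = ((levelSet S b).ncard * Pn) * ∏ i ∈ Finset.Ico b NS, H i := by ring
      _ < (∏ i ∈ Finset.range b, H i) * ∏ i ∈ Finset.Ico b NS, H i :=
          (Nat.mul_lt_mul_right hpos).mpr hstrict
  omega

/-- Suitability, second condition, for `Gcmz`. -/
lemma gcmz_suit2 {H : ℕ → ℕ} (hH : ∀ n, 2 ≤ H n) (n : ℕ) :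
    ∃ N, n < N ∧ ∀ S, IsFinTree H S n →
      ∀ η : Node, IsHNode H η → η.length = N → η.take n ∈ S →
        ∃ S' a b, (S', a, b) ∈ Gcmz H ∧ n < a ∧ a ≤ b ∧ b < N ∧ S ⊆ S' ∧
          levelSet S' n = levelSet S n ∧ η ∈ S' := by
  set Pn := ∏ i ∈ Finset.range n, H i with hPndef
  have hPn1 : 1 ≤ Pn := prod_range_one_le hH n
  have hnPn : n ≤ Pn := le_trans (le_of_lt (Nat.lt_two_pow_self (n := n))) (two_pow_le_prod_range hH n)
  set b := 2 * Pn + n + 32 with hbdef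
  set N := b + 1 with hNdef
  refine ⟨N, by omega, ?_⟩
  intro S hfS η hη hηlen hηtake
  have hlenS : ∀ x ∈ S, x.length ≤ n := fun x h => (hfS.2.1 x h).2
  have hnodesS : ∀ x ∈ S, IsHNode H x := fun x h => (hfS.2.1 x h).1
  set S' := (S ∪ zext (levelSet S n) (N - n)) ∪ takeSet η N with hS'def
  have hfS' : IsFinTree H S' N :=
    finTree_union (zext_finTree hH hfS (by omega)) (takeSet_finTree hη hηlen)
  have hηmem : η ∈ S' := Or.inr ⟨N, le_refl _, by rw [← hηlen, List.take_length]⟩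
  refine ⟨S', b, b, ?_, by omega, le_refl _, by omega, ?_, ?_, hηmem⟩
  · -- membership in Gcmz
    apply mem_Gcmz.mpr
    refine ⟨N, hfS', le_refl _, by omega, ?_⟩
    have hsplit : levelSet S' b ⊆
        ((fun ρ => ρ ++ List.replicate (b - n) 0) '' levelSet S n) ∪ {η.take b} := by
      rw [hS'def, levelSet_union]
      apply Set.union_subset_union
      · exact zext_level_subset hlenS (N - n) (by omega)
      · rw [takeSet_level hηlen (by omega : b ≤ N)]
    have hfinS := levelSet_finite hnodesS n
    have hcard : (levelSet S' b).ncard ≤ Pn + 1 := calc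
      (levelSet S' b).ncard ≤
          (((fun ρ => ρ ++ List.replicate (b - n) 0) '' levelSet S n) ∪
            {η.take b}).ncard :=
        Set.ncard_le_ncard hsplit ((hfinS.image _).union (Set.finite_singleton _))
      _ ≤ ((fun ρ => ρ ++ List.replicate (b - n) 0) '' levelSet S n).ncard +
          ({η.take b} : Set Node).ncard := Set.ncard_union_le _ _
      _ ≤ (levelSet S n).ncard + 1 := by
          rw [Set.ncard_singleton]
          exact Nat.add_le_add_right (Set.ncard_image_le hfinS) 1
      _ ≤ Pn + 1 := Nat.add_le_add_right (levelSet_ncard_le hnodesS n) 1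
    -- ℕ inequality
    have hnum : (b + 1) ^ 2 * (1 + Pn) ≤ ∏ i ∈ Finset.range b, H i := by
      calc (b + 1) ^ 2 * (1 + Pn)
          = (2 * Pn + n + 33) ^ 2 * (1 + Pn) := by
            rw [show b + 1 = 2 * Pn + n + 33 from by omega]
        _ ≤ Pn * 2 ^ (2 * Pn + 32) := numeric2 hPn1 hnPn
        _ = Pn * 2 ^ (b - n) := by rw [show b - n = 2 * Pn + 32 from by omega]
        _ ≤ Pn * ∏ i ∈ Finset.Ico n b, H i :=
            Nat.mul_le_mul_left _ (two_pow_le_prod_Ico hH n b)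
        _ = ∏ i ∈ Finset.range b, H i := Finset.prod_range_mul_prod_Ico _ (by omega)
    have hPbpos := prod_pos_real hH b
    rw [Finset.Icc_self, Finset.sum_singleton]
    rw [div_le_div_iff₀ hPbpos (by positivity), one_mul]
    have hn2 : (levelSet S' b).ncard * (b + 1) ^ 2 ≤ ∏ i ∈ Finset.range b, H i := by
      calc (levelSet S' b).ncard * (b + 1) ^ 2 ≤ (Pn + 1) * (b + 1) ^ 2 :=
          Nat.mul_le_mul_right _ hcard
        _ = (b + 1) ^ 2 * (1 + Pn) := by ring
        _ ≤ ∏ i ∈ Finset.range b, H i := hnum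
    calc ((levelSet S' b).ncard : ℝ) * ((b:ℝ) + 1) ^ 2
        = (((levelSet S' b).ncard * (b + 1) ^ 2 : ℕ) : ℝ) := by push_cast; ring
      _ ≤ ((∏ i ∈ Finset.range b, H i : ℕ) : ℝ) := by exact_mod_cast hn2
      _ = ∏ i ∈ Finset.range b, (H i : ℝ) := cast_prod_real H b
  · -- S ⊆ S'
    intro x hx
    exact Or.inl (Or.inl hx)
  · -- level sets at n agree
    rw [hS'def, levelSet_union, zext_level_eq hlenS, takeSet_level hηlen (by omega : n ≤ N)]
    apply Set.union_eq_self_of_subset_right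
    rintro ν hν
    rw [Set.mem_singleton_iff] at hν
    subst hν
    exact ⟨hηtake, by rw [List.length_take]; omega⟩
/-- Proposition 2.13(1): `𝔭^cmz_H = (𝒢^cmz_H, F_H)` is a suitable simplified
universality parameter (in particular `𝒢^cmz_H` satisfies the amalgamation axiom (δ),
which is part of the `UnivParam` structure). -/
theorem cmz_suitable (H : ℕ → ℕ) (hH : ∀ n, 2 ≤ H n) (FH : ℕ → ℕ) (hFH : StrictMono FH)
    (hFH2 : ∀ n, (n + 1) ^ 2 * ∏ i ∈ Finset.range (n + 1), H i < FH n) :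
    ∃ p : UnivParam H, p.G = Gcmz H ∧ p.F = FH ∧ Suitable p := by
  refine ⟨UnivParam.mk (Gcmz H) FH ?_ (Or.inl rfl) (gcmz_mono hH) hFH
      (gcmz_amalg hH hFH2),
    rfl, rfl, fun n => gcmz_suit1 hH n, fun n => gcmz_suit2 hH n⟩
  intro S a b h
  obtain ⟨N, h1, h2, h3, -⟩ := mem_Gcmz.mp h
  exact ⟨N, h1, h2, h3⟩

end UnivForcing
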